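/- Let φ : 𝔛 → 𝔛' be an algebraic isomorphism of m-ary coherent configurations, 2 ≤ k < m, Y a class of the (m−k)-ary coherent configuration obtained by projecting 𝔛 onto the last m−k coordinates, and Y' the corresponding class of the projection of 𝔛' under the bijection induced by φ. Then for every y ∈ Y and every y' ∈ Y', the map φ_{y,y'} : 𝔛_y → 𝔛'_{y'}, X ↦ φ(Xy)_{y'}, is an algebraic isomorphism of k-ary coherent configurations; moreover, it extends the algebraic isomorphism φ_k, i.e., φ_{y,y'}(pr_k(Z)) = φ_k(pr_k(Z)) on classes of pr_k(𝔛) viewed inside 𝔛_y. Here Xy denotes the class of 𝔛 containing (x_1,...,x_k, y_1,...,y_{m−k}) for some (equivalently, every) (x_1,...,x_k) ∈ X. -/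
import Mathlib


open Set

universe u

/-- An `m`-ary coherent configuration on a finite set `Ω`: a partition of `Ω^m`
satisfying (C1') constancy of the equality type `ρ`, (C2') closure under the
action of maps `σ : M → M`, (C3') well-defined numbers `n^{X₀}_{X₁,…,X_m}`. -/
structure MaryCC (m : ℕ) (Ω : Type u) : Type u where
  classes : Set (Set (Fin m → Ω))
  finite : Finite Ω
  cover : ∀ x : Fin m → Ω, ∃ X ∈ classes, x ∈ X
  disj : ∀ X ∈ classes, ∀ Y ∈ classes, X ≠ Y → X ∩ Y = ∅
  nonemp : ∀ X ∈ classes, X.Nonempty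
  rho : ∀ X ∈ classes, ∀ x ∈ X, ∀ y ∈ X, ∀ i j : Fin m, (x i = x j ↔ y i = y j)
  sigma : ∀ X ∈ classes, ∀ σ : Fin m → Fin m,
    (fun x : Fin m → Ω => x ∘ σ) '' X ∈ classes
  nnum : ∀ X₀ ∈ classes, ∀ Y : Fin m → Set (Fin m → Ω), (∀ i, Y i ∈ classes) →
    ∀ x ∈ X₀, ∀ x' ∈ X₀,
      {α : Ω | ∀ i, Function.update x i α ∈ Y i}.ncard =
      {α : Ω | ∀ i, Function.update x' i α ∈ Y i}.ncard

namespace MaryCC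

variable {Ω Ω' : Type u} {m k : ℕ}

/-- The number `n(x; Y₁,…,Y_m)` of points `α` with `x_{i←α} ∈ Y i` for all `i`. -/
noncomputable def nnumVal (x : Fin m → Ω) (Y : Fin m → Set (Fin m → Ω)) : ℕ :=
  {α : Ω | ∀ i, Function.update x i α ∈ Y i}.ncard

/-- An algebraic isomorphism of `m`-ary coherent configurations. -/
structure IsMAlgIso (𝔛 : MaryCC m Ω) (𝔛' : MaryCC m Ω')
    (φ : Set (Fin m → Ω) → Set (Fin m → Ω')) : Prop where
  bijOn : Set.BijOn φ 𝔛.classes 𝔛'.classes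
  sigma_eq : ∀ X ∈ 𝔛.classes, ∀ σ : Fin m → Fin m,
    φ ((fun x : Fin m → Ω => x ∘ σ) '' X) = (fun x : Fin m → Ω' => x ∘ σ) '' φ X
  nnum_eq : ∀ X₀ ∈ 𝔛.classes, ∀ Y : Fin m → Set (Fin m → Ω), (∀ i, Y i ∈ 𝔛.classes) →
    ∀ x ∈ X₀, ∀ x' ∈ φ X₀, nnumVal x Y = nnumVal x' fun i => φ (Y i)

/-- The projection onto the first `k` coordinates. -/
def prK (h : k ≤ m) (x : Fin m → Ω) : Fin k → Ω :=
  fun i => x (Fin.castLE h i)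

/-- The projection onto the last `m - k` coordinates. -/
def prTail (h : k ≤ m) (x : Fin m → Ω) : Fin (m - k) → Ω :=
  fun i => x ⟨k + i.1, by have := i.2; omega⟩

/-- Combining a `k`-tuple with an `(m-k)`-tuple into an `m`-tuple. -/
def glue (h : k ≤ m) (xb : Fin k → Ω) (y : Fin (m - k) → Ω) : Fin m → Ω :=
  fun j => if hj : j.1 < k then xb ⟨j.1, hj⟩ else y ⟨j.1 - k, by have := j.2; omega⟩

/-- The residue `X_y` of `X ⊆ Ω^m` with respect to `y ∈ Ω^{m-k}`. -/
def residue (h : k ≤ m) (X : Set (Fin m → Ω)) (y : Fin (m - k) → Ω) :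
    Set (Fin k → Ω) :=
  {xb | glue h xb y ∈ X}


variable {Ω Ω' : Type u} {m k : ℕ}

lemma class_eq_of_mem (𝔛 : MaryCC m Ω) {X X' : Set (Fin m → Ω)} (hX : X ∈ 𝔛.classes)
    (hX' : X' ∈ 𝔛.classes) {x : Fin m → Ω} (hx : x ∈ X) (hx' : x ∈ X') : X = X' := by
  by_contra hne
  have h := 𝔛.disj X hX X' hX' hne
  exact absurd (Set.mem_inter hx hx') (by simp [h])

noncomputable def clsOf (𝔛 : MaryCC m Ω) (x : Fin m → Ω) : Set (Fin m → Ω) :=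
  (𝔛.cover x).choose

lemma clsOf_mem_classes (𝔛 : MaryCC m Ω) (x : Fin m → Ω) : 𝔛.clsOf x ∈ 𝔛.classes :=
  (𝔛.cover x).choose_spec.1

lemma mem_clsOf (𝔛 : MaryCC m Ω) (x : Fin m → Ω) : x ∈ 𝔛.clsOf x :=
  (𝔛.cover x).choose_spec.2

lemma clsOf_eq (𝔛 : MaryCC m Ω) {X : Set (Fin m → Ω)} (hX : X ∈ 𝔛.classes)
    {x : Fin m → Ω} (hx : x ∈ X) : 𝔛.clsOf x = X :=
  class_eq_of_mem 𝔛 (clsOf_mem_classes 𝔛 x) hX (mem_clsOf 𝔛 x) hx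

lemma prTail_glue (h : k ≤ m) (xb : Fin k → Ω) (y : Fin (m - k) → Ω) :
    prTail h (glue h xb y) = y := by
  funext i
  simp only [prTail, glue]
  rw [dif_neg (by omega)]
  congr 1
  exact Fin.ext (by simp)

lemma prK_glue (h : k ≤ m) (xb : Fin k → Ω) (y : Fin (m - k) → Ω) :
    prK h (glue h xb y) = xb := by
  funext i
  simp only [prK, glue]
  rw [dif_pos (by simpa using i.2)]
  rfl

lemma glue_prK_prTail (h : k ≤ m) (x : Fin m → Ω) :
    glue h (prK h x) (prTail h x) = x := by
  funext j
  simp only [glue, prK, prTail]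
  split
  · rfl
  · next hj => exact congrArg x (Fin.ext (by simp; omega))

lemma mem_residue {h : k ≤ m} {W : Set (Fin m → Ω)} {y : Fin (m - k) → Ω}
    {xb : Fin k → Ω} : xb ∈ residue h W y ↔ glue h xb y ∈ W := Iff.rfl

lemma glue_update (h : k ≤ m) (xb : Fin k → Ω) (y : Fin (m - k) → Ω) (i : Fin k) (α : Ω) :
    glue h (Function.update xb i α) y = Function.update (glue h xb y) (Fin.castLE h i) α := by
  funext j
  by_cases hj : j = Fin.castLE h i
  · subst hj
    rw [Function.update_self]
    simp only [glue]
    rw [dif_pos (by simpa using i.2)]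
    have : (⟨(Fin.castLE h i).1, by simpa using i.2⟩ : Fin k) = i := Fin.ext rfl
    rw [this, Function.update_self]
  · rw [Function.update_of_ne hj]
    simp only [glue]
    split
    · next hjk =>
      rw [Function.update_of_ne]
      intro hc
      exact hj (Fin.ext (by simpa using congrArg Fin.val hc))
    · rfl

/-- tail representative map -/
def sigT (hkm : k < m) : Fin m → Fin m := fun j => if j.1 < k then ⟨k, hkm⟩ else j

lemma comp_sigT_eq (hkm : k < m) {x z : Fin m → Ω}
    (h : prTail hkm.le x = prTail hkm.le z) : x ∘ sigT hkm = z ∘ sigT hkm := by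
  funext j
  simp only [Function.comp, sigT]
  split
  · have h0 := congrFun h ⟨0, by omega⟩
    simpa [prTail] using h0
  · next hj =>
    have h0 := congrFun h ⟨j.1 - k, by have := j.2; omega⟩
    simp only [prTail] at h0
    have he : (⟨k + (j.1 - k), by have := j.2; omega⟩ : Fin m) = j := Fin.ext (by simp; omega)
    rwa [he] at h0

lemma prTail_comp_sigT (hkm : k < m) (x : Fin m → Ω) :
    prTail hkm.le (x ∘ sigT hkm) = prTail hkm.le x := by
  funext i
  simp only [prTail, Function.comp, sigT]
  rw [if_neg (by omega)]

lemma prTail_image_sigT (hkm : k < m) (W : Set (Fin m → Ω)) :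
    prTail hkm.le '' ((fun x : Fin m → Ω => x ∘ sigT hkm) '' W) = prTail hkm.le '' W := by
  rw [Set.image_image]
  simp only [prTail_comp_sigT]

/-- head representative map -/
def sigH (hk : 0 < k) (hkm : k < m) : Fin m → Fin m :=
  fun j => if j.1 < k then j else ⟨0, by omega⟩

lemma comp_sigH_eq (hk : 0 < k) (hkm : k < m) {x z : Fin m → Ω}
    (h : prK hkm.le x = prK hkm.le z) : x ∘ sigH hk hkm = z ∘ sigH hk hkm := by
  funext j
  simp only [Function.comp, sigH]
  split
  · next hj =>
    have h0 := congrFun h ⟨j.1, hj⟩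
    simpa [prK, Fin.castLE] using h0
  · have h0 := congrFun h ⟨0, hk⟩
    simpa [prK, Fin.castLE] using h0

lemma prK_comp_sigH (hk : 0 < k) (hkm : k < m) (x : Fin m → Ω) :
    prK hkm.le (x ∘ sigH hk hkm) = prK hkm.le x := by
  funext i
  simp only [prK, Function.comp, sigH, Fin.castLE]
  rw [if_pos (by simpa using i.2)]

lemma prK_image_sigH (hk : 0 < k) (hkm : k < m) (W : Set (Fin m → Ω)) :
    prK hkm.le '' ((fun x : Fin m → Ω => x ∘ sigH hk hkm) '' W) = prK hkm.le '' W := by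
  rw [Set.image_image]
  simp only [prK_comp_sigH]

lemma residue_nonempty_iff {hkm : k < m} {W : Set (Fin m → Ω)} {y : Fin (m - k) → Ω} :
    (residue hkm.le W y).Nonempty ↔ y ∈ prTail hkm.le '' W := by
  constructor
  · rintro ⟨xb, hxb⟩
    exact ⟨glue hkm.le xb y, hxb, prTail_glue _ _ _⟩
  · rintro ⟨x, hx, rfl⟩
    refine ⟨prK hkm.le x, ?_⟩
    show glue hkm.le (prK hkm.le x) (prTail hkm.le x) ∈ W
    rwa [glue_prK_prTail]

lemma residue_subset_prK {hkm : k < m} {W : Set (Fin m → Ω)} {y : Fin (m - k) → Ω} :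
    residue hkm.le W y ⊆ prK hkm.le '' W := by
  intro xb hxb
  exact ⟨glue hkm.le xb y, hxb, prK_glue _ _ _⟩

/-- extension of `σ : Fin k → Fin k` to `Fin m` by the identity -/
def sigExt (h : k ≤ m) (σ : Fin k → Fin k) : Fin m → Fin m :=
  fun j => if hj : j.1 < k then Fin.castLE h (σ ⟨j.1, hj⟩) else j

lemma glue_comp (h : k ≤ m) (xb : Fin k → Ω) (y : Fin (m - k) → Ω) (σ : Fin k → Fin k) :
    glue h (xb ∘ σ) y = (glue h xb y) ∘ sigExt h σ := by
  funext j
  simp only [Function.comp, glue, sigExt]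
  split
  · next hj =>
    rw [dif_pos (by simpa using (σ ⟨j.1, hj⟩).2)]
    rfl
  · rfl

lemma image_comp_residue (hkm : k < m) (W : Set (Fin m → Ω)) (y : Fin (m - k) → Ω)
    (σ : Fin k → Fin k) :
    (fun xb : Fin k → Ω => xb ∘ σ) '' residue hkm.le W y =
      residue hkm.le ((fun x : Fin m → Ω => x ∘ sigExt hkm.le σ) '' W) y := by
  ext xb'
  constructor
  · rintro ⟨xb, hxb, rfl⟩
    exact ⟨glue hkm.le xb y, hxb, (glue_comp _ _ _ _).symm⟩
  · rintro ⟨w, hw, hwe⟩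
    have htail : prTail hkm.le w = y := by
      funext i
      have := congrFun hwe ⟨k + i.1, by have := i.2; omega⟩
      simp only [Function.comp, sigExt, glue] at this
      rw [dif_neg (by omega), dif_neg (by omega)] at this
      simp only [prTail]
      rw [this]
      congr 1
      exact Fin.ext (by simp)
    refine ⟨prK hkm.le w, ?_, ?_⟩
    · show glue hkm.le (prK hkm.le w) y ∈ W
      rw [← htail, glue_prK_prTail]
      exact hw
    · funext i
      have := congrFun hwe (Fin.castLE hkm.le i)
      simp only [Function.comp, sigExt, glue] at this
      rw [dif_pos (by simpa using i.2), dif_pos (by simpa using i.2)] at this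
      simp only [Function.comp, prK]
      exact this


lemma ncard_eq_sum_fibers {A : Type u} {I : Type v} [Finite A] [Fintype I]
    (S : Set A) (c : A → I) :
    S.ncard = ∑ i : I, {a | a ∈ S ∧ c a = i}.ncard := by
  classical
  haveI := Fintype.ofFinite A
  rw [Set.ncard_eq_toFinset_card']
  rw [Finset.card_eq_sum_card_fiberwise (f := c) (t := Finset.univ)
    (fun a _ => Finset.mem_univ _)]
  refine Finset.sum_congr rfl fun i _ => ?_
  rw [Set.ncard_eq_toFinset_card']
  congr 1
  ext a
  simp [Set.mem_toFinset]

lemma forall_fin_split (hkm : k < m) (P : Fin m → Prop) :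
    (∀ i, P i) ↔ ((∀ i : Fin k, P (Fin.castLE hkm.le i)) ∧
      (∀ j : Fin (m - k), P ⟨k + j.1, by have := j.2; omega⟩)) := by
  constructor
  · exact fun h => ⟨fun i => h _, fun j => h _⟩
  · rintro ⟨h1, h2⟩ i
    by_cases hi : i.1 < k
    · exact h1 ⟨i.1, hi⟩
    · have h3 := h2 ⟨i.1 - k, by have := i.2; omega⟩
      have he : (⟨k + (i.1 - k), by have := i.2; omega⟩ : Fin m) = i :=
        Fin.ext (show k + (i.1 - k) = i.1 by omega)
      exact he ▸ (h3 : P ⟨k + (i.1 - k), by have := i.2; omega⟩)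

def combF (hkm : k < m) (Wf : Fin k → Set (Fin m → Ω))
    (g : Fin (m - k) → Set (Fin m → Ω)) : Fin m → Set (Fin m → Ω) :=
  fun i => if hi : i.1 < k then Wf ⟨i.1, hi⟩ else g ⟨i.1 - k, by have := i.2; omega⟩

lemma combF_castLE (hkm : k < m) (Wf : Fin k → Set (Fin m → Ω))
    (g : Fin (m - k) → Set (Fin m → Ω)) (i : Fin k) :
    combF hkm Wf g (Fin.castLE hkm.le i) = Wf i := by
  unfold combF
  rw [dif_pos (by simpa using i.2)]
  rfl

lemma combF_tail (hkm : k < m) (Wf : Fin k → Set (Fin m → Ω))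
    (g : Fin (m - k) → Set (Fin m → Ω)) (j : Fin (m - k)) :
    combF hkm Wf g ⟨k + j.1, by have := j.2; omega⟩ = g j := by
  unfold combF
  rw [dif_neg (by exact Nat.not_lt.mpr (Nat.le_add_right k j.1))]
  exact congrArg g (Fin.ext (show k + j.1 - k = j.1 by omega))

lemma combF_mem_classes (𝔛 : MaryCC m Ω) (hkm : k < m)
    {Wf : Fin k → Set (Fin m → Ω)} {g : Fin (m - k) → Set (Fin m → Ω)}
    (hWf : ∀ i, Wf i ∈ 𝔛.classes) (hg : ∀ j, g j ∈ 𝔛.classes) :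
    ∀ i, combF hkm Wf g i ∈ 𝔛.classes := by
  intro i
  unfold combF
  split
  · exact hWf _
  · exact hg _

lemma phi_combF (hkm : k < m) (φ : Set (Fin m → Ω) → Set (Fin m → Ω'))
    (Wf : Fin k → Set (Fin m → Ω)) (g : Fin (m - k) → Set (Fin m → Ω)) :
    (fun i => φ (combF hkm Wf g i)) =
      combF hkm (fun i => φ (Wf i)) (fun j => φ (g j)) := by
  funext i
  unfold combF
  split <;> rfl

lemma residue_count (𝔛 : MaryCC m Ω) (hkm : k < m)
    [Fintype (Fin (m - k) → {s : Set (Fin m → Ω) // s ∈ 𝔛.classes})]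
    (Wf : Fin k → Set (Fin m → Ω)) (xb : Fin k → Ω) (y : Fin (m - k) → Ω) :
    {α : Ω | ∀ i, Function.update xb i α ∈ residue hkm.le (Wf i) y}.ncard =
      ∑ g : Fin (m - k) → {s : Set (Fin m → Ω) // s ∈ 𝔛.classes},
        nnumVal (glue hkm.le xb y) (combF hkm Wf fun j => (g j).1) := by
  haveI : Finite Ω := 𝔛.finite
  rw [ncard_eq_sum_fibers _ (fun (α : Ω) (j : Fin (m - k)) =>
    (⟨𝔛.clsOf (Function.update (glue hkm.le xb y) ⟨k + j.1, by have := j.2; omega⟩ α),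
      clsOf_mem_classes 𝔛 _⟩ : {s : Set (Fin m → Ω) // s ∈ 𝔛.classes}))]
  refine Finset.sum_congr rfl fun g _ => ?_
  unfold nnumVal
  congr 1
  ext α
  simp only [Set.mem_setOf_eq, funext_iff]
  rw [forall_fin_split hkm]
  constructor
  · rintro ⟨hS, hcg⟩
    constructor
    · intro i
      rw [combF_castLE, ← glue_update]
      exact hS i
    · intro j
      rw [combF_tail]
      have h3 := congrArg Subtype.val (hcg j)
      rw [← h3]
      exact mem_clsOf 𝔛 _
  · rintro ⟨h1, h2⟩
    constructor
    · intro i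
      have h4 := h1 i
      rw [combF_castLE, ← glue_update] at h4
      exact h4
    · intro j
      have h4 := h2 j
      rw [combF_tail] at h4
      exact Subtype.ext (clsOf_eq 𝔛 (g j).2 h4)

lemma sig_image_eq_of_tail_inter (𝔛 : MaryCC m Ω) (hkm : k < m)
    {W V : Set (Fin m → Ω)} (hW : W ∈ 𝔛.classes) (hV : V ∈ 𝔛.classes)
    (hne : (prTail hkm.le '' W ∩ prTail hkm.le '' V).Nonempty) :
    (fun x : Fin m → Ω => x ∘ sigT hkm) '' W = (fun x : Fin m → Ω => x ∘ sigT hkm) '' V := by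
  obtain ⟨t, ⟨x, hx, hxt⟩, ⟨z, hz, hzt⟩⟩ := hne
  have hxz : x ∘ sigT hkm = z ∘ sigT hkm := comp_sigT_eq hkm (hxt.trans hzt.symm)
  refine class_eq_of_mem 𝔛 (𝔛.sigma W hW _) (𝔛.sigma V hV _) ⟨x, hx, rfl⟩ ?_
  rw [show (fun x : Fin m → Ω => x ∘ sigT hkm) x = x ∘ sigT hkm from rfl, hxz]
  exact ⟨z, hz, rfl⟩

lemma tails_eq_of_sig (hkm : k < m) {W V : Set (Fin m → Ω)}
    (h : (fun x : Fin m → Ω => x ∘ sigT hkm) '' W =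
      (fun x : Fin m → Ω => x ∘ sigT hkm) '' V) :
    prTail hkm.le '' W = prTail hkm.le '' V := by
  rw [← prTail_image_sigT hkm W, ← prTail_image_sigT hkm V, h]

lemma sig_image_eq_of_head_inter (𝔛 : MaryCC m Ω) (hk0 : 0 < k) (hkm : k < m)
    {W V : Set (Fin m → Ω)} (hW : W ∈ 𝔛.classes) (hV : V ∈ 𝔛.classes)
    (hne : (prK hkm.le '' W ∩ prK hkm.le '' V).Nonempty) :
    (fun x : Fin m → Ω => x ∘ sigH hk0 hkm) '' W =
      (fun x : Fin m → Ω => x ∘ sigH hk0 hkm) '' V := by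
  obtain ⟨t, ⟨x, hx, hxt⟩, ⟨z, hz, hzt⟩⟩ := hne
  have hxz : x ∘ sigH hk0 hkm = z ∘ sigH hk0 hkm := comp_sigH_eq hk0 hkm (hxt.trans hzt.symm)
  refine class_eq_of_mem 𝔛 (𝔛.sigma W hW _) (𝔛.sigma V hV _) ⟨x, hx, rfl⟩ ?_
  rw [show (fun x : Fin m → Ω => x ∘ sigH hk0 hkm) x = x ∘ sigH hk0 hkm from rfl, hxz]
  exact ⟨z, hz, rfl⟩

lemma heads_eq_of_sig (hk0 : 0 < k) (hkm : k < m) {W V : Set (Fin m → Ω)}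
    (h : (fun x : Fin m → Ω => x ∘ sigH hk0 hkm) '' W =
      (fun x : Fin m → Ω => x ∘ sigH hk0 hkm) '' V) :
    prK hkm.le '' W = prK hkm.le '' V := by
  rw [← prK_image_sigH hk0 hkm W, ← prK_image_sigH hk0 hkm V, h]

lemma tail_eq_transfer (𝔛 : MaryCC m Ω) (𝔛' : MaryCC m Ω') (hkm : k < m)
    {φ : Set (Fin m → Ω) → Set (Fin m → Ω')} (hφ : IsMAlgIso 𝔛 𝔛' φ)
    {W V : Set (Fin m → Ω)} (hW : W ∈ 𝔛.classes) (hV : V ∈ 𝔛.classes) :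
    prTail hkm.le '' W = prTail hkm.le '' V ↔
      prTail hkm.le '' (φ W) = prTail hkm.le '' (φ V) := by
  constructor
  · intro h
    have hne : (prTail hkm.le '' W ∩ prTail hkm.le '' V).Nonempty := by
      rw [h, Set.inter_self]
      exact (𝔛.nonemp V hV).image _
    have hs := sig_image_eq_of_tail_inter 𝔛 hkm hW hV hne
    have h2 := congrArg φ hs
    rw [hφ.sigma_eq W hW, hφ.sigma_eq V hV] at h2
    exact tails_eq_of_sig hkm h2
  · intro h
    have hne : (prTail hkm.le '' (φ W) ∩ prTail hkm.le '' (φ V)).Nonempty := by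
      rw [h, Set.inter_self]
      exact (𝔛'.nonemp (φ V) (hφ.bijOn.mapsTo hV)).image _
    have hs := sig_image_eq_of_tail_inter 𝔛' hkm (hφ.bijOn.mapsTo hW) (hφ.bijOn.mapsTo hV) hne
    have h2 : φ ((fun x : Fin m → Ω => x ∘ sigT hkm) '' W) =
        φ ((fun x : Fin m → Ω => x ∘ sigT hkm) '' V) := by
      rw [hφ.sigma_eq W hW, hφ.sigma_eq V hV]
      exact hs
    exact tails_eq_of_sig hkm (hφ.bijOn.injOn (𝔛.sigma W hW _) (𝔛.sigma V hV _) h2)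
end MaryCC
open MaryCC in
/-- Lemma: let `φ : 𝔛 → 𝔛'` be an algebraic isomorphism of `m`-ary coherent
configurations, `2 ≤ k < m`, `Y = pr_{last}(Z)` a class of the projection of `𝔛`
onto the last `m-k` coordinates (`Z ∈ 𝔛`), and `Y' = pr_{last}(φ Z)` the
corresponding class for `𝔛'`.  Then for every `y ∈ Y` and `y' ∈ Y'` the map
`φ_{y,y'} : 𝔛_y → 𝔛'_{y'}`, `Z_y ↦ (φ Z)_{y'}`, is a well-defined algebraic
isomorphism of the `k`-ary coherent configurations `𝔛_y` and `𝔛'_{y'}`;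
moreover, it extends `φ_k` (its extension to unions maps `pr_k(W)` to
`pr_k(φ W)` for every class `W` of `𝔛`). -/
theorem stmt_3 {Ω Ω' : Type u} {m k : ℕ} (hk2 : 2 ≤ k) (hkm : k < m)
    (𝔛 : MaryCC m Ω) (𝔛' : MaryCC m Ω')
    (φ : Set (Fin m → Ω) → Set (Fin m → Ω')) (hφ : IsMAlgIso 𝔛 𝔛' φ)
    (Z : Set (Fin m → Ω)) (hZ : Z ∈ 𝔛.classes)
    (Y : Set (Fin (m - k) → Ω)) (hY : Y = prTail hkm.le '' Z)
    (Y' : Set (Fin (m - k) → Ω')) (hY' : Y' = prTail hkm.le '' φ Z)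
    (y : Fin (m - k) → Ω) (hy : y ∈ Y) (y' : Fin (m - k) → Ω') (hy' : y' ∈ Y')
    -- 𝔛_y and 𝔛'_{y'} as k-ary coherent configurations
    (𝔜 : MaryCC k Ω)
    (h𝔜 : 𝔜.classes =
      {T | ∃ W ∈ 𝔛.classes, T = residue hkm.le W y ∧ T.Nonempty})
    (𝔜' : MaryCC k Ω')
    (h𝔜' : 𝔜'.classes =
      {T | ∃ W ∈ 𝔛'.classes, T = residue hkm.le W y' ∧ T.Nonempty}) :
    ∃ ψ : Set (Fin k → Ω) → Set (Fin k → Ω'),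
      (∀ W ∈ 𝔛.classes, (residue hkm.le W y).Nonempty →
         ψ (residue hkm.le W y) = residue hkm.le (φ W) y') ∧
      IsMAlgIso 𝔜 𝔜' ψ ∧
      (∀ W ∈ 𝔛.classes,
        ⋃₀ (ψ '' {T | T ∈ 𝔜.classes ∧ T ⊆ prK hkm.le '' W}) =
          prK hkm.le '' φ W) := by

  classical
  haveI : Finite Ω := 𝔛.finite
  haveI : Finite Ω' := 𝔛'.finite
  have hk0 : 0 < k := by omega
  have hyZ : y ∈ prTail hkm.le '' Z := hY ▸ hy
  have hy'Z : y' ∈ prTail hkm.le '' (φ Z) := hY' ▸ hy'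
  have hφZ : φ Z ∈ 𝔛'.classes := hφ.bijOn.mapsTo hZ
  have hmem𝔜 : ∀ T : Set (Fin k → Ω),
      T ∈ 𝔜.classes ↔ ∃ W ∈ 𝔛.classes, T = residue hkm.le W y ∧ T.Nonempty := by
    intro T; rw [h𝔜]; exact Iff.rfl
  have hmem𝔜' : ∀ T : Set (Fin k → Ω'),
      T ∈ 𝔜'.classes ↔ ∃ W ∈ 𝔛'.classes, T = residue hkm.le W y' ∧ T.Nonempty := by
    intro T; rw [h𝔜']; exact Iff.rfl
  have resNE : ∀ W ∈ 𝔛.classes,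
      ((residue hkm.le W y).Nonempty ↔ (residue hkm.le (φ W) y').Nonempty) := by
    intro W hW
    rw [residue_nonempty_iff (hkm := hkm), residue_nonempty_iff (hkm := hkm)]
    constructor
    · intro hyW
      have h := (tail_eq_transfer 𝔛 𝔛' hkm hφ hW hZ).1
        (tails_eq_of_sig hkm (sig_image_eq_of_tail_inter 𝔛 hkm hW hZ ⟨y, hyW, hyZ⟩))
      rw [h]
      exact hy'Z
    · intro hy'W
      have h1 := sig_image_eq_of_tail_inter 𝔛' hkm (hφ.bijOn.mapsTo hW) hφZ ⟨y', hy'W, hy'Z⟩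
      have h3 := (tail_eq_transfer 𝔛 𝔛' hkm hφ hW hZ).2 (tails_eq_of_sig hkm h1)
      rw [h3]
      exact hyZ
  have headNE : ∀ V ∈ 𝔛.classes, ∀ W ∈ 𝔛.classes,
      (prK hkm.le '' (φ V) ∩ prK hkm.le '' (φ W)).Nonempty →
      prK hkm.le '' V = prK hkm.le '' W := by
    intro V hV W hW hne
    have hs' := sig_image_eq_of_head_inter 𝔛' hk0 hkm (hφ.bijOn.mapsTo hV)
      (hφ.bijOn.mapsTo hW) hne
    have h2 : φ ((fun x : Fin m → Ω => x ∘ sigH hk0 hkm) '' V) =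
        φ ((fun x : Fin m → Ω => x ∘ sigH hk0 hkm) '' W) := by
      rw [hφ.sigma_eq V hV, hφ.sigma_eq W hW]
      exact hs'
    exact heads_eq_of_sig hk0 hkm (hφ.bijOn.injOn (𝔛.sigma V hV _) (𝔛.sigma W hW _) h2)
  have headNE' : ∀ V ∈ 𝔛.classes, ∀ W ∈ 𝔛.classes,
      (prK hkm.le '' V ∩ prK hkm.le '' W).Nonempty →
      prK hkm.le '' (φ V) = prK hkm.le '' (φ W) := by
    intro V hV W hW hne
    have hs := sig_image_eq_of_head_inter 𝔛 hk0 hkm hV hW hne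
    have h2 := congrArg φ hs
    rw [hφ.sigma_eq V hV, hφ.sigma_eq W hW] at h2
    exact heads_eq_of_sig hk0 hkm h2
  have hψgen : ∀ W ∈ 𝔛.classes, (residue hkm.le W y).Nonempty →
      (fun T : Set (Fin k → Ω) =>
        if hT : ∃ W', W' ∈ 𝔛.classes ∧ residue hkm.le W' y = T ∧ T.Nonempty
        then residue hkm.le (φ hT.choose) y' else ∅) (residue hkm.le W y) =
        residue hkm.le (φ W) y' := by
    intro W hW hne
    have hc : ∃ W', W' ∈ 𝔛.classes ∧ residue hkm.le W' y = residue hkm.le W y ∧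
        (residue hkm.le W y).Nonempty := ⟨W, hW, rfl, hne⟩
    simp only
    rw [dif_pos hc]
    obtain ⟨hc1, hc2, -⟩ := hc.choose_spec
    obtain ⟨xb, hxb⟩ := hne
    have hxb2 : xb ∈ residue hkm.le hc.choose y := by rw [hc2]; exact hxb
    have h3 : hc.choose = W :=
      class_eq_of_mem 𝔛 hc1 hW (mem_residue.mp hxb2) (mem_residue.mp hxb)
    rw [h3]
  have hψgen' : ∀ W ∈ 𝔛.classes, ∀ _ : (residue hkm.le W y).Nonempty,
      (if hT : ∃ W', W' ∈ 𝔛.classes ∧ residue hkm.le W' y = residue hkm.le W y ∧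
          (residue hkm.le W y).Nonempty
       then residue hkm.le (φ hT.choose) y' else ∅) = residue hkm.le (φ W) y' :=
    fun W hW hne => hψgen W hW hne
  refine ⟨fun T : Set (Fin k → Ω) =>
    if hT : ∃ W', W' ∈ 𝔛.classes ∧ residue hkm.le W' y = T ∧ T.Nonempty
    then residue hkm.le (φ hT.choose) y' else ∅, hψgen, ⟨⟨?_, ?_, ?_⟩, ?_, ?_⟩, ?_⟩
  -- MapsTo
  · intro T hT
    obtain ⟨W, hW, rfl, hne⟩ := (hmem𝔜 T).1 hT
    rw [hψgen W hW hne]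
    exact (hmem𝔜' _).2 ⟨φ W, hφ.bijOn.mapsTo hW, rfl, (resNE W hW).1 hne⟩
  -- InjOn
  · intro T1 hT1 T2 hT2 he
    obtain ⟨W1, hW1, rfl, hne1⟩ := (hmem𝔜 T1).1 hT1
    obtain ⟨W2, hW2, rfl, hne2⟩ := (hmem𝔜 T2).1 hT2
    rw [hψgen W1 hW1 hne1, hψgen W2 hW2 hne2] at he
    obtain ⟨xb', hxb'⟩ := (resNE W1 hW1).1 hne1
    have hxb'2 : xb' ∈ residue hkm.le (φ W2) y' := by rw [← he]; exact hxb'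
    have hφeq : φ W1 = φ W2 := class_eq_of_mem 𝔛' (hφ.bijOn.mapsTo hW1)
      (hφ.bijOn.mapsTo hW2) (mem_residue.mp hxb') (mem_residue.mp hxb'2)
    rw [hφ.bijOn.injOn hW1 hW2 hφeq]
  -- SurjOn
  · intro T' hT'
    obtain ⟨W', hW', rfl, hne'⟩ := (hmem𝔜' T').1 hT'
    obtain ⟨W, hW, rfl⟩ := hφ.bijOn.surjOn hW'
    have hne : (residue hkm.le W y).Nonempty := (resNE W hW).2 hne'
    exact ⟨residue hkm.le W y, (hmem𝔜 _).2 ⟨W, hW, rfl, hne⟩, hψgen W hW hne⟩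
  -- sigma_eq
  · intro T hT σ
    obtain ⟨W, hW, rfl, hne⟩ := (hmem𝔜 T).1 hT
    rw [image_comp_residue hkm W y σ]
    have hWσ : (fun x : Fin m → Ω => x ∘ sigExt hkm.le σ) '' W ∈ 𝔛.classes :=
      𝔛.sigma W hW _
    have hneσ : (residue hkm.le ((fun x : Fin m → Ω => x ∘ sigExt hkm.le σ) '' W) y).Nonempty := by
      rw [← image_comp_residue hkm W y σ]
      exact hne.image _
    rw [hψgen' _ hWσ hneσ, hφ.sigma_eq W hW (sigExt hkm.le σ),
      ← image_comp_residue hkm (φ W) y' σ, hψgen' W hW hne]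
  -- nnum_eq
  · intro T₀ hT₀ Yf hYf xb hxb xb' hxb'
    obtain ⟨W₀, hW₀, rfl, hne₀⟩ := (hmem𝔜 T₀).1 hT₀
    have hx : glue hkm.le xb y ∈ W₀ := mem_residue.mp hxb
    have hxb'' : xb' ∈ residue hkm.le (φ W₀) y' := by
      rw [← hψgen W₀ hW₀ hne₀]
      exact hxb'
    have hx' : glue hkm.le xb' y' ∈ φ W₀ := mem_residue.mp hxb''
    have hYf' : ∀ i, ∃ W, W ∈ 𝔛.classes ∧ Yf i = residue hkm.le W y ∧ (Yf i).Nonempty :=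
      fun i => (hmem𝔜 (Yf i)).1 (hYf i)
    choose Wf hWf1 hWf2 hWf3 using hYf'
    have hψYf : ∀ i, (fun T : Set (Fin k → Ω) =>
        if hT : ∃ W', W' ∈ 𝔛.classes ∧ residue hkm.le W' y = T ∧ T.Nonempty
        then residue hkm.le (φ hT.choose) y' else ∅) (Yf i) =
        residue hkm.le (φ (Wf i)) y' := by
      intro i
      rw [hWf2 i]
      exact hψgen (Wf i) (hWf1 i) ((hWf2 i) ▸ hWf3 i)
    haveI : Fintype (Fin (m - k) → {s : Set (Fin m → Ω) // s ∈ 𝔛.classes}) :=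
      Fintype.ofFinite _
    haveI : Fintype (Fin (m - k) → {s : Set (Fin m → Ω') // s ∈ 𝔛'.classes}) :=
      Fintype.ofFinite _
    unfold nnumVal
    have hL : {α : Ω | ∀ i, Function.update xb i α ∈ Yf i} =
        {α : Ω | ∀ i, Function.update xb i α ∈ residue hkm.le (Wf i) y} := by
      ext α
      simp only [Set.mem_setOf_eq, hWf2]
    have hR : {α' : Ω' | ∀ i, Function.update xb' i α' ∈ (fun T : Set (Fin k → Ω) =>
        if hT : ∃ W', W' ∈ 𝔛.classes ∧ residue hkm.le W' y = T ∧ T.Nonempty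
        then residue hkm.le (φ hT.choose) y' else ∅) (Yf i)} =
        {α' : Ω' | ∀ i, Function.update xb' i α' ∈ residue hkm.le (φ (Wf i)) y'} := by
      ext α'
      simp only [Set.mem_setOf_eq, hψYf]
    rw [hL, hR, residue_count 𝔛 hkm Wf xb y,
      residue_count 𝔛' hkm (fun i => φ (Wf i)) xb' y']
    have he : Function.Bijective (fun s : {s : Set (Fin m → Ω) // s ∈ 𝔛.classes} =>
        (⟨φ s.1, hφ.bijOn.mapsTo s.2⟩ : {s : Set (Fin m → Ω') // s ∈ 𝔛'.classes})) := by
      constructor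
      · intro a b hab
        exact Subtype.ext (hφ.bijOn.injOn a.2 b.2 (congrArg Subtype.val hab))
      · rintro ⟨s', hs'⟩
        obtain ⟨s, hs, rfl⟩ := hφ.bijOn.surjOn hs'
        exact ⟨⟨s, hs⟩, rfl⟩
    rw [← Equiv.sum_comp (Equiv.piCongrRight fun _ : Fin (m - k) => Equiv.ofBijective _ he)
      (fun g => nnumVal (glue hkm.le xb' y')
        (combF hkm (fun i => φ (Wf i)) fun j => (g j).1))]
    refine Finset.sum_congr rfl fun g _ => ?_
    have hstep := hφ.nnum_eq W₀ hW₀ (combF hkm Wf fun j => (g j).1)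
      (combF_mem_classes 𝔛 hkm hWf1 (fun j => (g j).2)) _ hx _ hx'
    rw [hstep, phi_combF]
    rfl
  -- extension property
  · intro W hW
    apply Set.Subset.antisymm
    · intro xb' hxb'
      obtain ⟨t', ht', hxt⟩ := hxb'
      obtain ⟨T, hTA, rfl⟩ := ht'
      obtain ⟨hT𝔜, hTsub⟩ := hTA
      obtain ⟨V, hV, rfl, hTne⟩ := (hmem𝔜 T).1 hT𝔜
      rw [hψgen V hV hTne] at hxt
      have h1 : xb' ∈ prK hkm.le '' (φ V) := residue_subset_prK (hkm := hkm) hxt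
      obtain ⟨xb₀, hxb₀⟩ := hTne
      have hne : (prK hkm.le '' V ∩ prK hkm.le '' W).Nonempty :=
        ⟨xb₀, residue_subset_prK (hkm := hkm) hxb₀, hTsub hxb₀⟩
      rw [← headNE' V hV W hW hne]
      exact h1
    · intro xb' hxb'
      obtain ⟨w', hw', rfl⟩ := hxb'
      obtain ⟨V, hV, hφV⟩ := hφ.bijOn.surjOn
        (clsOf_mem_classes 𝔛' (glue hkm.le (prK hkm.le w') y'))
      have hxres : prK hkm.le w' ∈ residue hkm.le (φ V) y' := by
        show glue hkm.le (prK hkm.le w') y' ∈ φ V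
        rw [hφV]
        exact mem_clsOf 𝔛' _
      have hresne : (residue hkm.le V y).Nonempty := (resNE V hV).2 ⟨_, hxres⟩
      have hneφ : (prK hkm.le '' (φ V) ∩ prK hkm.le '' (φ W)).Nonempty :=
        ⟨prK hkm.le w', residue_subset_prK (hkm := hkm) hxres, ⟨w', hw', rfl⟩⟩
      have h4 := headNE V hV W hW hneφ
      refine ⟨(fun T : Set (Fin k → Ω) =>
        if hT : ∃ W', W' ∈ 𝔛.classes ∧ residue hkm.le W' y = T ∧ T.Nonempty
        then residue hkm.le (φ hT.choose) y' else ∅) (residue hkm.le V y),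
        ⟨residue hkm.le V y, ⟨(hmem𝔜 _).2 ⟨V, hV, rfl, hresne⟩, ?_⟩, rfl⟩, ?_⟩
      · rw [← h4]
        exact residue_subset_prK (hkm := hkm)
      · rw [hψgen V hV hresne]
        exact hxres
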